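/- Let |0⟩, |1⟩ be the standard basis of ℂ² and define the two-qubit density operator ρ = (1/3)·[(|0⟩⊗|0⟩ + |1⟩⊗|1⟩)(⟨0|⊗⟨0| + ⟨1|⊗⟨1|) + (|1⟩⊗|0⟩)(⟨1|⊗⟨0|)] on ℂ² ⊗ ℂ². Then ρ is 1-2 sharable but not 2-2 sharable. In particular, for a generic bipartite qubit state, 1-n sharability does not imply n-n sharability. -/

import Mathlib

open Matrix
open scoped ComplexOrder

noncomputable section

/-- A density operator: positive semidefinite with trace one. -/
def IsDensity {n : Type*} [Fintype n] (M : Matrix n n ℂ) : Prop :=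
  M.PosSemidef ∧ M.trace = 1

/-- The reduced state of `w` on the `i`-th left factor and the `j`-th right factor,
obtained as the partial trace over all the other factors. -/
def pairReduce {L R : Type*} [Fintype L] [DecidableEq L] [Fintype R] [DecidableEq R]
    {m n : ℕ} (w : Matrix ((Fin m → L) × (Fin n → R)) ((Fin m → L) × (Fin n → R)) ℂ)
    (i : Fin m) (j : Fin n) : Matrix (L × R) (L × R) ℂ :=
  fun p q => ∑ f : Fin m → L, ∑ g : Fin n → R,
    if f i = p.1 ∧ g j = p.2 then
      w (f, g) (Function.update f i q.1, Function.update g j q.2)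
    else 0

/-- `ρ` is `m`-`n` sharable if some density operator on `m` left copies and `n` right
copies reduces to `ρ` on every left-right pair. -/
def Sharable {L R : Type*} [Fintype L] [DecidableEq L] [Fintype R] [DecidableEq R]
    (m n : ℕ) (ρ : Matrix (L × R) (L × R) ℂ) : Prop :=
  ∃ w : Matrix ((Fin m → L) × (Fin n → R)) ((Fin m → L) × (Fin n → R)) ℂ,
    IsDensity w ∧ ∀ (i : Fin m) (j : Fin n), pairReduce w i j = ρ

/-- The two-qubit state `ρ = (1/3)[(|00⟩+|11⟩)(⟨00|+⟨11|) + |10⟩⟨10|]`. -/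
def rho13 : Matrix (Fin 2 × Fin 2) (Fin 2 × Fin 2) ℂ :=
  fun p q => (1 / 3 : ℂ) *
    ((if p.1 = p.2 then 1 else 0) * (if q.1 = q.2 then 1 else 0) +
      (if p = ((1 : Fin 2), (0 : Fin 2)) ∧ q = ((1 : Fin 2), (0 : Fin 2)) then 1 else 0))

/-!
For 1-2 sharability, `ρ` is the reduced state, on the left qubit and either right qubit, of the
pure state `(|0,00⟩ + |1,01⟩ + |1,10⟩)/√3`, a W state with its left qubit flipped.

For 2-2, let `w` extend `ρ` to `l₁l₂r₁r₂`. Since `⟨01|ρ|01⟩ = 0`, positivity kills the rows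
and columns of `w` at the basis states with `l₁r₂ = 01` or `l₂r₁ = 01`. The coherence
`⟨00|ρ|11⟩ = 1/3` of the pair `(l₂, r₂)` is then carried by the single entry
`⟨10,00|w|11,01⟩`. But both of these basis states lie in the block `l₁r₁ = 10` of weight
`⟨10|ρ|10⟩ = 1/3`, and positivity bounds the entry by half of that.
-/

namespace Matrix.PosSemidef

variable {𝕜 ι : Type*} [RCLike 𝕜] {M : Matrix ι ι 𝕜}

theorem re_apply_self_nonneg (hM : M.PosSemidef) (i : ι) : 0 ≤ RCLike.re (M i i) :=
  (RCLike.nonneg_iff.mp hM.diag_nonneg).1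

theorem im_apply_self (hM : M.PosSemidef) (i : ι) : RCLike.im (M i i) = 0 :=
  (RCLike.nonneg_iff.mp hM.diag_nonneg).2

theorem norm_apply_sq_le (hM : M.PosSemidef) (i j : ι) :
    ‖M i j‖ ^ 2 ≤ RCLike.re (M i i) * RCLike.re (M j j) := by
  have hdet := (hM.submatrix ![i, j]).det_nonneg
  rw [det_fin_two] at hdet
  simp only [submatrix_apply, Matrix.cons_val_zero, Matrix.cons_val_one] at hdet
  rw [← hM.isHermitian.apply j i, RCLike.star_def, RCLike.mul_conj] at hdet
  have h := (RCLike.nonneg_iff.mp hdet).1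
  rw [map_sub, RCLike.mul_re, hM.im_apply_self, hM.im_apply_self, ← RCLike.ofReal_pow,
    RCLike.ofReal_re] at h
  linarith

theorem apply_eq_zero_of_re_apply_self_eq_zero (hM : M.PosSemidef) {i : ι}
    (hi : RCLike.re (M i i) = 0) (j : ι) : M i j = 0 ∧ M j i = 0 := by
  have hij := hM.norm_apply_sq_le i j
  have hji := hM.norm_apply_sq_le j i
  rw [hi] at hij hji
  constructor <;> apply norm_eq_zero.mp <;> nlinarith [norm_nonneg (M i j), norm_nonneg (M j i)]

theorem two_mul_norm_apply_le (hM : M.PosSemidef) (i j : ι) :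
    2 * ‖M i j‖ ≤ RCLike.re (M i i) + RCLike.re (M j j) := by
  have h := hM.norm_apply_sq_le i j
  nlinarith [sq_nonneg (RCLike.re (M i i) - RCLike.re (M j j)), norm_nonneg (M i j),
    hM.re_apply_self_nonneg i, hM.re_apply_self_nonneg j]

end Matrix.PosSemidef

section pairReduce

variable {L R : Type*} [Fintype L] [DecidableEq L] [Fintype R] [DecidableEq R] {m n : ℕ}
  {w : Matrix ((Fin m → L) × (Fin n → R)) ((Fin m → L) × (Fin n → R)) ℂ}

theorem pairReduce_apply_self (i : Fin m) (j : Fin n) (p : L × R) :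
    pairReduce w i j p p = ∑ x with x.1 i = p.1 ∧ x.2 j = p.2, w x x := by
  rw [pairReduce, Finset.sum_filter, ← Finset.univ_product_univ, Finset.sum_product]
  refine Finset.sum_congr rfl fun f _ => Finset.sum_congr rfl fun g _ => ?_
  split_ifs with h
  · rw [← h.1, ← h.2, Function.update_eq_self, Function.update_eq_self]
  · rfl

theorem Matrix.PosSemidef.sum_re_apply_self_le_re_pairReduce (hw : w.PosSemidef)
    {i : Fin m} {j : Fin n} {p : L × R} {s : Finset ((Fin m → L) × (Fin n → R))}
    (hs : ∀ x ∈ s, x.1 i = p.1 ∧ x.2 j = p.2) :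
    ∑ x ∈ s, (w x x).re ≤ (pairReduce w i j p p).re := by
  rw [pairReduce_apply_self, Complex.re_sum]
  exact Finset.sum_le_sum_of_subset_of_nonneg (fun x hx => by simpa using hs x hx)
    fun x _ _ => hw.re_apply_self_nonneg x

theorem Matrix.PosSemidef.apply_eq_zero_of_pairReduce_eq_zero (hw : w.PosSemidef)
    {i : Fin m} {j : Fin n} {p : L × R} (hp : pairReduce w i j p p = 0)
    {x : (Fin m → L) × (Fin n → R)} (hx : x.1 i = p.1 ∧ x.2 j = p.2)
    (y : (Fin m → L) × (Fin n → R)) :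
    w x y = 0 ∧ w y x = 0 := by
  refine hw.apply_eq_zero_of_re_apply_self_eq_zero (le_antisymm ?_ (hw.re_apply_self_nonneg x)) y
  have h := hw.sum_re_apply_self_le_re_pairReduce (i := i) (j := j) (p := p) (s := {x})
    (by simpa using hx)
  rwa [Finset.sum_singleton, hp, Complex.zero_re] at h

theorem Matrix.PosSemidef.two_mul_norm_apply_le_re_pairReduce (hw : w.PosSemidef)
    {i : Fin m} {j : Fin n} {p : L × R} {x y : (Fin m → L) × (Fin n → R)} (hxy : x ≠ y)
    (hx : x.1 i = p.1 ∧ x.2 j = p.2) (hy : y.1 i = p.1 ∧ y.2 j = p.2) :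
    2 * ‖w x y‖ ≤ (pairReduce w i j p p).re := by
  have h := hw.sum_re_apply_self_le_re_pairReduce (i := i) (j := j) (p := p) (s := {x, y})
    (by simp [hx, hy])
  rw [Finset.sum_pair hxy] at h
  exact (hw.two_mul_norm_apply_le x y).trans h

end pairReduce

section uniformSuperposition

variable {ι : Type*} [DecidableEq ι]

def uniformSuperposition (s : Finset ι) : Matrix ι ι ℂ :=
  (s.card : ℂ)⁻¹ •
    vecMulVec (fun x => if x ∈ s then 1 else 0) (star fun x => if x ∈ s then 1 else 0)

theorem uniformSuperposition_apply (s : Finset ι) (x y : ι) :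
    uniformSuperposition s x y = if x ∈ s ∧ y ∈ s then (s.card : ℂ)⁻¹ else 0 := by
  by_cases hx : x ∈ s <;> by_cases hy : y ∈ s <;>
    simp [uniformSuperposition, vecMulVec_apply, hx, hy]

theorem isDensity_uniformSuperposition [Fintype ι] {s : Finset ι} (hs : s.Nonempty) :
    IsDensity (uniformSuperposition s) := by
  refine ⟨(posSemidef_vecMulVec_self_star _).smul (by positivity), ?_⟩
  rw [uniformSuperposition, trace_smul, trace_vecMulVec]
  simp [dotProduct, hs.card_pos.ne']

end uniformSuperposition

theorem univ_fin_one_to_fin_two : (Finset.univ : Finset (Fin 1 → Fin 2)) = {![0], ![1]} := by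
  decide

theorem univ_fin_two_to_fin_two :
    (Finset.univ : Finset (Fin 2 → Fin 2)) = {![0, 0], ![0, 1], ![1, 0], ![1, 1]} := by
  decide

def flippedWState :
    Matrix ((Fin 1 → Fin 2) × (Fin 2 → Fin 2)) ((Fin 1 → Fin 2) × (Fin 2 → Fin 2)) ℂ :=
  uniformSuperposition {(![0], ![0, 0]), (![1], ![0, 1]), (![1], ![1, 0])}

theorem pairReduce_flippedWState (i : Fin 1) (j : Fin 2) :
    pairReduce flippedWState i j = rho13 := by
  ext ⟨a, b⟩ ⟨c, d⟩
  fin_cases i; fin_cases j <;> fin_cases a <;> fin_cases b <;> fin_cases c <;> fin_cases d <;>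
    simp [pairReduce, univ_fin_one_to_fin_two, univ_fin_two_to_fin_two, flippedWState,
      uniformSuperposition_apply, rho13] <;> decide

theorem not_sharable_two_two_rho13 : ¬ Sharable 2 2 rho13 := by
  rintro ⟨w, ⟨hw, -⟩, hred⟩
  have hzero : ∀ x : (Fin 2 → Fin 2) × (Fin 2 → Fin 2),
      (x.1 0 = 0 ∧ x.2 1 = 1) ∨ (x.1 1 = 0 ∧ x.2 0 = 1) → ∀ y, w x y = 0 ∧ w y x = 0 := by
    rintro x (hx | hx)
    · exact hw.apply_eq_zero_of_pairReduce_eq_zero (p := (0, 1)) (by simp [hred, rho13]) hx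
    · exact hw.apply_eq_zero_of_pairReduce_eq_zero (p := (0, 1)) (by simp [hred, rho13]) hx
  have hab : w (![1, 0], ![0, 0]) (![1, 1], ![0, 1]) = 1 / 3 := by
    have h := congrFun (congrFun (hred 1 1) (0, 0)) (1, 1)
    rw [pairReduce, Fintype.sum_eq_single ![1, 0], Fintype.sum_eq_single ![0, 0]] at h
    · convert h using 1
      · congr 1; decide
      · simp [rho13]
    · intro g hg
      have hg0 : g 1 = 0 → g 0 = 1 := by revert g; decide
      split_ifs with hg1
      · exact (hzero _ (Or.inr ⟨rfl, hg0 hg1.2⟩) _).1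
      · rfl
    · intro f hf
      have hf0 : f 1 = 0 → f 0 = 0 := by revert f; decide
      refine Finset.sum_eq_zero fun g _ => ?_
      split_ifs with hf1
      · exact (hzero _ (Or.inl ⟨by simp [hf0 hf1.1], by simp⟩) _).2
      · rfl
  have hle := hw.two_mul_norm_apply_le_re_pairReduce (i := 0) (j := 0) (p := (1, 0))
    (x := (![1, 0], ![0, 0])) (y := (![1, 1], ![0, 1])) (by decide) ⟨rfl, rfl⟩ ⟨rfl, rfl⟩
  rw [hred, hab] at hle
  norm_num [rho13] at hle

theorem sharable_one_two_rho13 : Sharable 1 2 rho13 :=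
  ⟨flippedWState, isDensity_uniformSuperposition (Finset.insert_nonempty _ _),
    pairReduce_flippedWState⟩

theorem one_two_sharable_but_not_two_two_sharable :
    Sharable 1 2 rho13 ∧ ¬ Sharable 2 2 rho13 :=
  ⟨sharable_one_two_rho13, not_sharable_two_two_rho13⟩
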